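/- Let δ ∈ (0,1), L > 0, and let a₁ ≥ a₂ ≥ … ≥ a_n ≥ 0 and p₁, …, p_n ≥ 0 be real numbers satisfying a_i ≤ p_i²/16 for every i. If ∑_{i=1}^n p_i ≤ (1+δ)·4L and ∑_{i=1}^n a_i ≥ (1−δ)·L², then a₁ ≥ ((1−δ)/(1+δ))²·L². -/
import Mathlib


/-- **Lemma 3.8 (isoperimetric core).** If areas `a i` (decreasing, with `a i ≤ p i²/16`)
satisfy `∑ p i ≤ (1+δ)4L` and `∑ a i ≥ (1−δ)L²`, then the largest area satisfies
`a 0 ≥ ((1−δ)/(1+δ))² L²`. Here `a i` plays the role of `a_{i+1}` of the statement,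
so `a 0` is `a₁`. -/
theorem isoperimetric_largest_area (δ L : ℝ) (hδ0 : 0 < δ) (hδ1 : δ < 1) (hL : 0 < L)
    (n : ℕ) (a p : ℕ → ℝ)
    (ha_anti : ∀ i j, i ≤ j → j < n → a j ≤ a i)
    (ha_nonneg : ∀ i < n, 0 ≤ a i)
    (hp_nonneg : ∀ i < n, 0 ≤ p i)
    (hiso : ∀ i < n, a i ≤ p i ^ 2 / 16)
    (hsum_p : ∑ i ∈ Finset.range n, p i ≤ (1 + δ) * (4 * L))
    (hsum_a : (1 - δ) * L ^ 2 ≤ ∑ i ∈ Finset.range n, a i) :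
    ((1 - δ) / (1 + δ)) ^ 2 * L ^ 2 ≤ a 0 := by
  have hpos : (0:ℝ) < (1 - δ) * L ^ 2 := by nlinarith [sq_nonneg L, mul_pos hL hL]
  have hn : 0 < n := by
    rcases Nat.eq_zero_or_pos n with h | h
    · exfalso; rw [h] at hsum_a; simp at hsum_a
      nlinarith
    · exact h
  have ha0 : 0 ≤ a 0 := ha_nonneg 0 hn
  set s := Real.sqrt (a 0) with hs
  have hs0 : 0 ≤ s := Real.sqrt_nonneg _
  -- each a i ≤ s * sqrt (a i)
  have key : ∀ i ∈ Finset.range n, a i ≤ s * Real.sqrt (a i) := by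
    intro i hi
    rw [Finset.mem_range] at hi
    have hai : 0 ≤ a i := ha_nonneg i hi
    have h1 : Real.sqrt (a i) ≤ s := Real.sqrt_le_sqrt (ha_anti 0 i (Nat.zero_le i) hi)
    calc a i = Real.sqrt (a i) * Real.sqrt (a i) := (Real.mul_self_sqrt hai).symm
      _ ≤ s * Real.sqrt (a i) := by
          exact mul_le_mul_of_nonneg_right h1 (Real.sqrt_nonneg _)
  -- 4 sqrt (a i) ≤ p i
  have key2 : ∀ i ∈ Finset.range n, 4 * Real.sqrt (a i) ≤ p i := by
    intro i hi
    rw [Finset.mem_range] at hi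
    have hai : 0 ≤ a i := ha_nonneg i hi
    have hpi : 0 ≤ p i := hp_nonneg i hi
    have : Real.sqrt (a i) ≤ p i / 4 := by
      rw [show p i / 4 = Real.sqrt ((p i / 4) ^ 2) from (Real.sqrt_sq (by positivity)).symm]
      apply Real.sqrt_le_sqrt
      nlinarith [hiso i hi]
    linarith
  have hsq : ∑ i ∈ Finset.range n, Real.sqrt (a i) ≤ (1 + δ) * L := by
    have h4 : 4 * ∑ i ∈ Finset.range n, Real.sqrt (a i) ≤ ∑ i ∈ Finset.range n, p i := by
      rw [Finset.mul_sum]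
      exact Finset.sum_le_sum key2
    nlinarith
  have hsum : ∑ i ∈ Finset.range n, a i ≤ s * ((1 + δ) * L) := by
    calc ∑ i ∈ Finset.range n, a i ≤ ∑ i ∈ Finset.range n, s * Real.sqrt (a i) :=
          Finset.sum_le_sum key
      _ = s * ∑ i ∈ Finset.range n, Real.sqrt (a i) := (Finset.mul_sum _ _ _).symm
      _ ≤ s * ((1 + δ) * L) := mul_le_mul_of_nonneg_left hsq hs0
  -- so (1-δ)L² ≤ s (1+δ) L, hence s ≥ (1-δ)L/(1+δ)
  have hsge : (1 - δ) * L / (1 + δ) ≤ s := by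
    rw [div_le_iff₀ (by linarith)]
    nlinarith
  have := mul_self_le_mul_self (div_nonneg (by nlinarith) (by linarith)) hsge
  have hss : s * s = a 0 := Real.mul_self_sqrt ha0
  calc ((1 - δ) / (1 + δ)) ^ 2 * L ^ 2 = ((1 - δ) * L / (1 + δ)) * ((1 - δ) * L / (1 + δ)) := by
        ring
    _ ≤ s * s := this
    _ = a 0 := hss
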